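/- arXiv:1108.0057 — 2 statements merged into one kernel-verified Lean document; each statement's English description precedes it below -/
import Mathlib

section
/- Let λ ∈ (0, 1) and s ∈ [0, 1). If p ≥ 2, then p(p − 1) · ∫₀¹ (λ t · 1_{[0, 1−λ]}(t) + (1 − λ)(1 − t) · 1_{[1−λ, 1]}(t)) · ((1 − t) + t s)^{p−2} dt ≥ λ(1 − λ^{p−1}). If 1 < p < 2, then the same integral expression is bounded below by p(p − 1)·λ(1 − λ)/2. -/
/-!
With `K` the tent kernel of the integrand (`λ t` on `[0, 1 - λ]`, `(1 - λ)(1 - t)` on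
`[1 - λ, 1]`), Taylor's formula with integral remainder gives
`p (p - 1) ∫₀¹ K(t) (1 - t)^(p - 2) dt = λ · 1^p + (1 - λ) · 0^p - λ^p = λ (1 - λ^(p - 1))`,
the Jensen gap of `x ↦ x^p`. Since `(1 - t) + t s` lies between `1 - t` and `1`, the weight
`((1 - t) + t s)^(p - 2)` dominates `(1 - t)^(p - 2)` when `p ≥ 2` and dominates `1` when `p < 2`;
in the second case `∫₀¹ K = λ (1 - λ) / 2` gives the bound.
-/

open MeasureTheory Set intervalIntegral Real

noncomputable def jensenKernel (l t : ℝ) : ℝ :=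
  l * t * (Icc 0 (1 - l)).indicator (fun _ => (1 : ℝ)) t +
    (1 - l) * (1 - t) * (Icc (1 - l) 1).indicator (fun _ => (1 : ℝ)) t

lemma intervalIntegrable_of_nonneg_of_le {f : ℝ → ℝ} {a b C : ℝ} (hf : Measurable f)
    (h0 : ∀ t ∈ uIoc a b, 0 ≤ f t) (hC : ∀ t ∈ uIoc a b, f t ≤ C) :
    IntervalIntegrable f volume a b :=
  intervalIntegrable_const.mono_fun' hf.aestronglyMeasurable.restrict
    (ae_restrict_of_forall_mem measurableSet_uIoc fun t ht =>
      (norm_of_nonneg (h0 t ht)).trans_le (hC t ht))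

lemma mul_rpow_sub_two {u p : ℝ} (hu : 0 ≤ u) (hp : p ≠ 1) : u * u ^ (p - 2) = u ^ (p - 1) := by
  rw [show p - 1 = p - 2 + 1 by ring, rpow_add_one' hu (by contrapose! hp; linarith), mul_comm]

lemma one_sub_mul_rpow_le_one {s p t : ℝ} (hs0 : 0 ≤ s) (hs1 : s ≤ 1) (hp : 1 < p)
    (ht0 : 0 ≤ t) (ht1 : t ≤ 1) : (1 - t) * ((1 - t) + t * s) ^ (p - 2) ≤ 1 := by
  have hb0 : 1 - t ≤ (1 - t) + t * s := by nlinarith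
  have hb1 : (1 - t) + t * s ≤ 1 := by nlinarith
  rcases le_or_gt 2 p with hp2 | hp2
  · exact mul_le_one₀ (by linarith) (rpow_nonneg (by linarith) _)
      (rpow_le_one (by linarith) hb1 (by linarith))
  rcases ht1.lt_or_eq with ht1 | rfl
  · calc (1 - t) * ((1 - t) + t * s) ^ (p - 2) ≤ (1 - t) * (1 - t) ^ (p - 2) :=
          mul_le_mul_of_nonneg_left (rpow_le_rpow_of_nonpos (by linarith) hb0 (by linarith))
            (by linarith)
      _ = (1 - t) ^ (p - 1) := mul_rpow_sub_two (by linarith) hp.ne'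
      _ ≤ 1 := rpow_le_one (by linarith) (by linarith) (by linarith)
  · simp

lemma intervalIntegrable_one_sub_rpow (a b : ℝ) {q : ℝ} (hq : -1 < q) :
    IntervalIntegrable (fun t => (1 - t) ^ q) volume a b := by
  simpa using (intervalIntegrable_rpow' hq (a := 1 - a) (b := 1 - b)).comp_sub_left 1

lemma integral_one_sub_rpow (a b : ℝ) {q : ℝ} (hq : -1 < q) :
    ∫ t in a..b, (1 - t) ^ q = ((1 - a) ^ (q + 1) - (1 - b) ^ (q + 1)) / (q + 1) := by
  rw [integral_comp_sub_left (fun x => x ^ q), integral_rpow (Or.inl hq)]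

section jensenKernel

variable {l : ℝ}

lemma measurable_jensenKernel (l : ℝ) : Measurable (jensenKernel l) := by
  unfold jensenKernel
  fun_prop (disch := exact measurableSet_Icc)

lemma jensenKernel_nonneg (hl0 : 0 ≤ l) (hl1 : l ≤ 1) (t : ℝ) : 0 ≤ jensenKernel l t := by
  simp only [jensenKernel, indicator_apply, mem_Icc]
  split_ifs with hA hB hB
  · nlinarith [hA.1, hB.2]
  · nlinarith [hA.1]
  · nlinarith [hB.2]
  · simp

lemma jensenKernel_le_two_mul_one_sub (hl0 : 0 ≤ l) {t : ℝ} (ht : t ≤ 1) :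
    jensenKernel l t ≤ 2 * (1 - t) := by
  simp only [jensenKernel, indicator_apply, mem_Icc]
  split_ifs with hA hB hB
  · nlinarith [hA.1, hA.2]
  · nlinarith [hA.1, hA.2]
  · nlinarith
  · linarith

lemma intervalIntegrable_jensenKernel_mul_rpow {s p : ℝ} (hl0 : 0 ≤ l) (hl1 : l ≤ 1)
    (hs0 : 0 ≤ s) (hs1 : s ≤ 1) (hp : 1 < p) :
    IntervalIntegrable (fun t => jensenKernel l t * ((1 - t) + t * s) ^ (p - 2)) volume 0 1 := by
  refine intervalIntegrable_of_nonneg_of_le (C := 2)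
    ((measurable_jensenKernel l).mul (by fun_prop)) (fun t ht => ?_) fun t ht => ?_ <;>
    rw [uIoc_of_le zero_le_one] at ht
  · exact mul_nonneg (jensenKernel_nonneg hl0 hl1 t) (rpow_nonneg (by nlinarith [ht.2]) _)
  · calc jensenKernel l t * ((1 - t) + t * s) ^ (p - 2)
          ≤ 2 * (1 - t) * ((1 - t) + t * s) ^ (p - 2) :=
          mul_le_mul_of_nonneg_right (jensenKernel_le_two_mul_one_sub hl0 ht.2)
            (rpow_nonneg (by nlinarith [ht.2]) _)
      _ ≤ 2 := by nlinarith [one_sub_mul_rpow_le_one hs0 hs1 hp ht.1.le ht.2]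

lemma intervalIntegrable_jensenKernel_mul_one_sub_rpow {p : ℝ} (hl0 : 0 ≤ l) (hl1 : l ≤ 1)
    (hp : 1 < p) :
    IntervalIntegrable (fun t => jensenKernel l t * (1 - t) ^ (p - 2)) volume 0 1 := by
  simpa using intervalIntegrable_jensenKernel_mul_rpow hl0 hl1 le_rfl zero_le_one hp

lemma intervalIntegrable_jensenKernel (hl0 : 0 ≤ l) (hl1 : l ≤ 1) :
    IntervalIntegrable (jensenKernel l) volume 0 1 := by
  simpa using intervalIntegrable_jensenKernel_mul_one_sub_rpow hl0 hl1 one_lt_two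

lemma integral_jensenKernel_mul (hl0 : 0 ≤ l) (hl1 : l ≤ 1) {f : ℝ → ℝ}
    (hf : IntervalIntegrable (fun t => jensenKernel l t * f t) volume 0 1) :
    ∫ t in (0 : ℝ)..1, jensenKernel l t * f t =
      (∫ t in (0 : ℝ)..(1 - l), l * t * f t) + ∫ t in (1 - l)..1, (1 - l) * (1 - t) * f t := by
  have h0 : (0 : ℝ) ≤ 1 - l := by linarith
  have h1 : 1 - l ≤ (1 : ℝ) := by linarith
  rw [← integral_add_adjacent_intervals (hf.mono_set ?left) (hf.mono_set ?right)]
  case left => rw [uIcc_of_le h0, uIcc_of_le zero_le_one]; exact Icc_subset_Icc le_rfl h1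
  case right => rw [uIcc_of_le h1, uIcc_of_le zero_le_one]; exact Icc_subset_Icc h0 le_rfl
  congr 1
  · -- both indicators equal `1` at `t = 1 - l`, a null set
    refine integral_congr_ae ?_
    filter_upwards [Measure.ae_ne volume (1 - l)] with t hne ht
    rw [uIoc_of_le h0] at ht
    have hlt : t < 1 - l := lt_of_le_of_ne ht.2 hne
    simp [jensenKernel, ht.1.le, ht.2, hlt.not_ge]
  · refine integral_congr_ae (Filter.Eventually.of_forall fun t ht => ?_)
    rw [uIoc_of_le h1] at ht
    simp [jensenKernel, ht.1.le, ht.2, ht.1.not_ge]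

lemma integral_jensenKernel (hl0 : 0 ≤ l) (hl1 : l ≤ 1) :
    ∫ t in (0 : ℝ)..1, jensenKernel l t = l * (1 - l) / 2 := by
  have hsplit := integral_jensenKernel_mul hl0 hl1 (f := fun _ => 1)
    (by simpa using intervalIntegrable_jensenKernel hl0 hl1)
  simp only [mul_one] at hsplit
  rw [hsplit, intervalIntegral.integral_const_mul, intervalIntegral.integral_const_mul,
    integral_id, integral_comp_sub_left (fun u => u) 1, integral_id]
  ring

lemma integral_jensenKernel_mul_one_sub_rpow {p : ℝ} (hl0 : 0 ≤ l) (hl1 : l ≤ 1) (hp : 1 < p) :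
    p * (p - 1) * ∫ t in (0 : ℝ)..1, jensenKernel l t * (1 - t) ^ (p - 2) =
      l * (1 - l ^ (p - 1)) := by
  have hleft : ∫ t in (0 : ℝ)..(1 - l), l * t * (1 - t) ^ (p - 2) =
      l * ((1 - l ^ (p - 1)) / (p - 1) - (1 - l ^ p) / p) := by
    have heq : EqOn (fun t => l * t * (1 - t) ^ (p - 2))
        (fun t => l * ((1 - t) ^ (p - 2) - (1 - t) ^ (p - 1))) (uIcc 0 (1 - l)) := fun t ht => by
      rw [uIcc_of_le (by linarith)] at ht
      simp only [← mul_rpow_sub_two (by linarith [ht.2] : 0 ≤ 1 - t) hp.ne']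
      ring
    rw [integral_congr heq, intervalIntegral.integral_const_mul,
      integral_sub (intervalIntegrable_one_sub_rpow _ _ (by linarith))
        (intervalIntegrable_one_sub_rpow _ _ (by linarith)),
      integral_one_sub_rpow _ _ (by linarith), integral_one_sub_rpow _ _ (by linarith),
      show p - 2 + 1 = p - 1 by ring, sub_add_cancel]
    norm_num
  have hright :
      ∫ t in (1 - l)..1, (1 - l) * (1 - t) * (1 - t) ^ (p - 2) = (1 - l) * (l ^ p / p) := by
    have heq : EqOn (fun t => (1 - l) * (1 - t) * (1 - t) ^ (p - 2))
        (fun t => (1 - l) * (1 - t) ^ (p - 1)) (uIcc (1 - l) 1) := fun t ht => by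
      rw [uIcc_of_le (by linarith)] at ht
      simp only [mul_assoc, mul_rpow_sub_two (by linarith [ht.2] : 0 ≤ 1 - t) hp.ne']
    rw [integral_congr heq, intervalIntegral.integral_const_mul,
      integral_one_sub_rpow _ _ (by linarith), sub_add_cancel, sub_self, zero_rpow (by linarith)]
    norm_num
  have hlp : l ^ p = l * l ^ (p - 1) := by
    rw [mul_comm, ← rpow_add_one' hl0 (by linarith), sub_add_cancel]
  have hp0 : p ≠ 0 := (zero_lt_one.trans hp).ne'
  have hp1 : p - 1 ≠ 0 := sub_ne_zero.2 hp.ne'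
  rw [integral_jensenKernel_mul hl0 hl1
    (intervalIntegrable_jensenKernel_mul_one_sub_rpow hl0 hl1 hp), hleft, hright, hlp]
  field_simp
  ring

end jensenKernel

theorem jensen_error_integral_bounds
    (l : ℝ) (hl : l ∈ Set.Ioo (0 : ℝ) 1) (s : ℝ) (hs : s ∈ Set.Ico (0 : ℝ) 1) (p : ℝ) :
    (2 ≤ p →
      l * (1 - l ^ (p - 1)) ≤
        p * (p - 1) *
          ∫ t in (0 : ℝ)..1,
            (l * t * Set.indicator (Set.Icc (0 : ℝ) (1 - l)) (fun _ => (1 : ℝ)) t +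
              (1 - l) * (1 - t) * Set.indicator (Set.Icc (1 - l) (1 : ℝ)) (fun _ => (1 : ℝ)) t) *
              ((1 - t) + t * s) ^ (p - 2)) ∧
    (1 < p → p < 2 →
      p * (p - 1) * l * (1 - l) / 2 ≤
        p * (p - 1) *
          ∫ t in (0 : ℝ)..1,
            (l * t * Set.indicator (Set.Icc (0 : ℝ) (1 - l)) (fun _ => (1 : ℝ)) t +
              (1 - l) * (1 - t) * Set.indicator (Set.Icc (1 - l) (1 : ℝ)) (fun _ => (1 : ℝ)) t) *
              ((1 - t) + t * s) ^ (p - 2)) := by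
  obtain ⟨hl0, hl1⟩ := hl
  obtain ⟨hs0, hs1⟩ := hs
  have hK : ∀ t, 0 ≤ jensenKernel l t := jensenKernel_nonneg hl0.le hl1.le
  have hint {p : ℝ} (hp : 1 < p) :=
    intervalIntegrable_jensenKernel_mul_rpow hl0.le hl1.le hs0 hs1.le hp
  refine ⟨fun hp2 => ?_, fun hp1 hp2 => ?_⟩
  · have hp1 : 1 < p := by linarith
    rw [← integral_jensenKernel_mul_one_sub_rpow hl0.le hl1.le hp1]
    refine mul_le_mul_of_nonneg_left (integral_mono_on zero_le_one
      (intervalIntegrable_jensenKernel_mul_one_sub_rpow hl0.le hl1.le hp1) (hint hp1)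
      fun t ht => ?_) (by nlinarith)
    exact mul_le_mul_of_nonneg_left
      (rpow_le_rpow (by linarith [ht.2]) (by nlinarith [ht.1]) (by linarith)) (hK t)
  · rw [mul_assoc _ l, mul_div_assoc, ← integral_jensenKernel hl0.le hl1.le]
    refine mul_le_mul_of_nonneg_left (integral_mono_on zero_le_one
      (intervalIntegrable_jensenKernel hl0.le hl1.le) (hint hp1) fun t ht => ?_) (by nlinarith)
    rcases ht.2.lt_or_eq with ht1 | rfl
    · exact le_mul_of_one_le_right (hK t) <|
        one_le_rpow_of_pos_of_le_one_of_nonpos (by nlinarith [ht.1]) (by nlinarith [ht.1])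
          (by linarith)
    · -- the weight is `s ^ (p - 2)`, which is `0` rather than `∞` when `s = 0`; but `K 1 = 0`
      have hK1 : jensenKernel l 1 = 0 :=
        le_antisymm (by simpa using jensenKernel_le_two_mul_one_sub hl0.le le_rfl) (hK 1)
      change jensenKernel l 1 ≤ jensenKernel l 1 * _
      simp [hK1]
end

section
/- Let p ∈ ℝ with p > 1, let S be a finite set with at least two elements, let w : S → (0, 1) with Σ_{x∈S} w_x = 1, let γ : S → [0,∞), let ε > 0, and let x₀, x̂ ∈ S with x₀ ≠ x̂ be such that γ_{x̂} > 0, γ_{x₀} ≤ ε·γ_{x̂} and ε(1 − w_{x₀})/w_{x̂} < 1. Then (Σ_{x∈S} w_x γ_x)^p ≤ (1 − δ)·Σ_{x∈S} w_x γ_x^p, where δ = (1 − ε(1 − w_{x₀})/w_{x̂})² · (1 − w_{x₀}) · min{ p(p − 1)·w_{x₀}/2 , 1 − (1 − w_{x₀})^{p−1} }. -/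
/-!
Jensen's inequality for the points other than `x₀` reduces the claim to two points: `γ x₀` with
weight `w₀ = w x₀` and the weighted mean `s` of the others with weight `1 - w₀`. The hypotheses
give `γ x₀ ≤ c s` with `c = ε (1 - w₀) / w x'`, so after dividing by `s` it suffices to bound the
two-point Jensen gap `w₀ f(t) + (1 - w₀) f(1) - f(w₀ t + 1 - w₀)` of `f(u) = u^p` from below by
`(1 - t)^2 (1 - w₀) min{…}` for `0 ≤ t ≤ 1`.
For `p ≤ 2` this is the `p (p - 1)`-strong convexity of `f` on `[0, 1]`.
For `p ≥ 2` the function `u ↦ f(t + (1 - t) u) - (1 - t)^2 f(u)` is convex on `[0, 1]`, since its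
second derivative is `(1 - t)^2 (f''(t + (1 - t) u) - f''(u))` and `f''` is increasing; Jensen for
it at the points `0, 1` with weights `w₀, 1 - w₀` gives the constant `1 - (1 - w₀)^(p-1)`.
Since the two-point mean of `f` is at most `1`, the additive gap becomes the factor `1 - δ`.
-/

open Real Set Finset

lemma convexOn_Icc_of_hasDerivAt2_nonneg {a b : ℝ} {f f' f'' : ℝ → ℝ}
    (hf : ContinuousOn f (Icc a b)) (hf' : ∀ x ∈ Ioo a b, HasDerivAt f (f' x) x)
    (hf'' : ∀ x ∈ Ioo a b, HasDerivAt f' (f'' x) x) (hf''₀ : ∀ x ∈ Ioo a b, 0 ≤ f'' x) :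
    ConvexOn ℝ (Icc a b) f := by
  refine convexOn_of_hasDerivWithinAt2_nonneg (f' := f') (f'' := f'') (convex_Icc a b) hf
    ?_ ?_ ?_ <;> simp only [interior_Icc]
  · exact fun x hx ↦ (hf' x hx).hasDerivWithinAt
  · exact fun x hx ↦ (hf'' x hx).hasDerivWithinAt
  · exact hf''₀

lemma strongConvexOn_rpow_Icc {p : ℝ} (hp : 1 ≤ p) (hp2 : p ≤ 2) :
    StrongConvexOn (Icc 0 1) (p * (p - 1)) fun t : ℝ ↦ t ^ p := by
  rw [strongConvexOn_iff_convex]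
  simp only [Real.norm_eq_abs, sq_abs]
  refine convexOn_Icc_of_hasDerivAt2_nonneg (f' := fun t ↦ p * t ^ (p - 1) - p * (p - 1) * t)
    (f'' := fun t ↦ p * ((p - 1) * t ^ (p - 1 - 1)) - p * (p - 1)) ?_ (fun t ht ↦ ?_)
    (fun t ht ↦ ?_) (fun t ht ↦ ?_)
  · exact ((continuous_rpow_const (by linarith)).sub (by fun_prop)).continuousOn
  · exact ((hasDerivAt_rpow_const (p := p) (Or.inl ht.1.ne')).sub ((hasDerivAt_pow 2 t).const_mul
      (p * (p - 1) / 2))).congr_deriv (by norm_num; ring)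
  · exact (((hasDerivAt_rpow_const (p := p - 1) (Or.inl ht.1.ne')).const_mul p).sub
      ((hasDerivAt_id t).const_mul (p * (p - 1)))).congr_deriv (by simp)
  · have hpow : 1 ≤ t ^ (p - 1 - 1) :=
      one_le_rpow_of_pos_of_le_one_of_nonpos ht.1 ht.2.le (by linarith)
    have := mul_nonneg (mul_nonneg (by linarith : 0 ≤ p) (by linarith : 0 ≤ p - 1))
      (sub_nonneg.2 hpow)
    linarith

lemma convexOn_rpow_affine_sub_rpow {p c : ℝ} (hp : 2 ≤ p) (hc : 0 ≤ c) :
    ConvexOn ℝ (Icc 0 1) fun t : ℝ ↦ (c + (1 - c) * t) ^ p - (1 - c) ^ 2 * t ^ p := by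
  have hline (t : ℝ) : HasDerivAt (fun t ↦ c + (1 - c) * t) (1 - c) t := by
    simpa using ((hasDerivAt_id t).const_mul (1 - c)).const_add c
  refine convexOn_Icc_of_hasDerivAt2_nonneg
    (f' := fun t ↦ (1 - c) * p * (c + (1 - c) * t) ^ (p - 1) - (1 - c) ^ 2 * (p * t ^ (p - 1)))
    (f'' := fun t ↦ (1 - c) * p * ((1 - c) * (p - 1) * (c + (1 - c) * t) ^ (p - 1 - 1))
      - (1 - c) ^ 2 * (p * ((p - 1) * t ^ (p - 1 - 1)))) ?_ (fun t _ ↦ ?_)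
    (fun t _ ↦ ?_) (fun t ht ↦ ?_)
  · exact (((continuous_const.add (continuous_const.mul continuous_id)).rpow_const
      fun _ ↦ Or.inr (by linarith)).sub
      (continuous_const.mul (continuous_rpow_const (by linarith)))).continuousOn
  · exact ((hline t).rpow_const (Or.inr (by linarith))).sub
      ((hasDerivAt_rpow_const (Or.inr (by linarith))).const_mul _)
  · exact (((hline t).rpow_const (Or.inr (by linarith))).const_mul _).sub
      (((hasDerivAt_rpow_const (Or.inr (by linarith))).const_mul _).const_mul _)
  · have hmono : t ^ (p - 1 - 1) ≤ (c + (1 - c) * t) ^ (p - 1 - 1) :=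
      rpow_le_rpow ht.1.le (by nlinarith [ht.2]) (by linarith)
    have := mul_nonneg (mul_nonneg (mul_nonneg (sq_nonneg (1 - c)) (by linarith : 0 ≤ p))
      (by linarith : 0 ≤ p - 1)) (sub_nonneg.2 hmono)
    linarith

lemma two_point_gap_of_le_two {p w₀ t : ℝ} (hp : 1 ≤ p) (hp2 : p ≤ 2) (hw₀ : 0 ≤ w₀)
    (hw₁ : w₀ ≤ 1) (ht₀ : 0 ≤ t) (ht₁ : t ≤ 1) :
    p * (p - 1) / 2 * w₀ * (1 - w₀) * (1 - t) ^ 2 ≤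
      w₀ * t ^ p + (1 - w₀) - (w₀ * t + (1 - w₀)) ^ p := by
  have h := (strongConvexOn_rpow_Icc hp hp2).2 ⟨ht₀, ht₁⟩ (right_mem_Icc.2 zero_le_one) hw₀
    (sub_nonneg.2 hw₁) (add_sub_cancel w₀ 1)
  simp only [smul_eq_mul, mul_one, one_rpow, Real.norm_eq_abs, sq_abs] at h
  linarith

lemma two_point_gap_of_two_le {p w₀ t : ℝ} (hp : 2 ≤ p) (hw₀ : 0 ≤ w₀) (hw₁ : w₀ ≤ 1)
    (ht₀ : 0 ≤ t) :
    (1 - t) ^ 2 * (1 - w₀) * (1 - (1 - w₀) ^ (p - 1)) ≤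
      w₀ * t ^ p + (1 - w₀) - (w₀ * t + (1 - w₀)) ^ p := by
  have h := (convexOn_rpow_affine_sub_rpow hp ht₀).2 (left_mem_Icc.2 zero_le_one)
    (right_mem_Icc.2 zero_le_one) hw₀ (sub_nonneg.2 hw₁) (add_sub_cancel w₀ 1)
  have hW : (1 - w₀) ^ p = (1 - w₀) * (1 - w₀) ^ (p - 1) := by
    rw [← rpow_one_add' (sub_nonneg.2 hw₁) (by linarith), add_sub_cancel]
  have hmean : t + (1 - t) * (1 - w₀) = w₀ * t + (1 - w₀) := by ring
  simp only [smul_eq_mul, mul_zero, mul_one, zero_add, add_zero, sub_zero, add_sub_cancel,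
    one_rpow, zero_rpow (by linarith : p ≠ 0), hmean, hW] at h
  linarith

noncomputable def refinedJensenConst (p w₀ : ℝ) : ℝ :=
  (1 - w₀) * min (p * (p - 1) * w₀ / 2) (1 - (1 - w₀) ^ (p - 1))

lemma refinedJensenConst_nonneg {p w₀ : ℝ} (hp : 1 ≤ p) (hw₀ : 0 ≤ w₀) (hw₁ : w₀ ≤ 1) :
    0 ≤ refinedJensenConst p w₀ := by
  have hW : 0 ≤ 1 - w₀ := sub_nonneg.2 hw₁
  have hp' : 0 ≤ p * (p - 1) := mul_nonneg (by linarith) (by linarith)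
  exact mul_nonneg hW (le_min (by positivity)
    (sub_nonneg.2 (rpow_le_one hW (by linarith) (by linarith))))

lemma two_point_gap_ge_refinedJensenConst {p w₀ t : ℝ} (hp : 1 ≤ p) (hw₀ : 0 ≤ w₀)
    (hw₁ : w₀ ≤ 1) (ht₀ : 0 ≤ t) (ht₁ : t ≤ 1) :
    (1 - t) ^ 2 * refinedJensenConst p w₀ ≤
      w₀ * t ^ p + (1 - w₀) - (w₀ * t + (1 - w₀)) ^ p := by
  have hcoef : 0 ≤ (1 - t) ^ 2 * (1 - w₀) := mul_nonneg (sq_nonneg _) (sub_nonneg.2 hw₁)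
  rw [refinedJensenConst, ← mul_assoc]
  rcases le_total p 2 with hp2 | hp2
  · calc _ ≤ (1 - t) ^ 2 * (1 - w₀) * (p * (p - 1) * w₀ / 2) :=
          mul_le_mul_of_nonneg_left (min_le_left _ _) hcoef
      _ ≤ _ := by linarith [two_point_gap_of_le_two hp hp2 hw₀ hw₁ ht₀ ht₁]
  · exact (mul_le_mul_of_nonneg_left (min_le_right _ _) hcoef).trans
      (two_point_gap_of_two_le hp2 hw₀ hw₁ ht₀)

lemma rpow_two_point_le {p w₀ t : ℝ} (hp : 1 ≤ p) (hw₀ : 0 ≤ w₀) (hw₁ : w₀ ≤ 1)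
    (ht₀ : 0 ≤ t) (ht₁ : t ≤ 1) :
    (w₀ * t + (1 - w₀)) ^ p ≤
      (1 - (1 - t) ^ 2 * refinedJensenConst p w₀) * (w₀ * t ^ p + (1 - w₀)) := by
  have hgap := two_point_gap_ge_refinedJensenConst hp hw₀ hw₁ ht₀ ht₁
  have hdefect : 0 ≤ (1 - t) ^ 2 * refinedJensenConst p w₀ :=
    mul_nonneg (sq_nonneg _) (refinedJensenConst_nonneg hp hw₀ hw₁)
  have hmean : w₀ * t ^ p + (1 - w₀) ≤ 1 := by
    linarith [mul_le_mul_of_nonneg_left (rpow_le_one ht₀ ht₁ (by linarith : 0 ≤ p)) hw₀]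
  linarith [mul_le_mul_of_nonneg_left hmean hdefect]

lemma rpow_two_point_le_of_le_mul {p w₀ a b c : ℝ} (hp : 1 ≤ p) (hw₀ : 0 ≤ w₀)
    (hw₁ : w₀ ≤ 1) (ha : 0 ≤ a) (hb : 0 < b) (hab : a ≤ c * b) (hc : c ≤ 1) :
    (w₀ * a + (1 - w₀) * b) ^ p ≤
      (1 - (1 - c) ^ 2 * refinedJensenConst p w₀) * (w₀ * a ^ p + (1 - w₀) * b ^ p) := by
  have htc : a / b ≤ c := (div_le_iff₀ hb).2 hab
  have hnorm := rpow_two_point_le hp hw₀ hw₁ (div_nonneg ha hb.le) (htc.trans hc)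
  have hscale : b ^ p * (w₀ * (a / b) ^ p + (1 - w₀)) = w₀ * a ^ p + (1 - w₀) * b ^ p := by
    rw [div_rpow ha hb.le]
    field_simp [(rpow_pos_of_pos hb p).ne']
  calc (w₀ * a + (1 - w₀) * b) ^ p = b ^ p * (w₀ * (a / b) + (1 - w₀)) ^ p := by
        rw [← mul_rpow hb.le (by positivity)]
        congr 1
        field_simp
    _ ≤ b ^ p * ((1 - (1 - c) ^ 2 * refinedJensenConst p w₀) *
          (w₀ * (a / b) ^ p + (1 - w₀))) := by
        gcongr
        refine hnorm.trans (mul_le_mul_of_nonneg_right ?_ ?_)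
        · have : (1 - c) ^ 2 ≤ (1 - a / b) ^ 2 := pow_le_pow_left₀ (by linarith) (by linarith) 2
          linarith [mul_le_mul_of_nonneg_right this (refinedJensenConst_nonneg hp hw₀ hw₁)]
        · exact add_nonneg (mul_nonneg hw₀ (rpow_nonneg (div_nonneg ha hb.le) p))
            (sub_nonneg.2 hw₁)
    _ = _ := by rw [mul_left_comm, hscale]

lemma rpow_weighted_mean_le_weighted_mean_rpow {ι : Type*} (s : Finset ι) {w z : ι → ℝ}
    (hw : ∀ i ∈ s, 0 ≤ w i) (hw' : 0 < ∑ i ∈ s, w i) (hz : ∀ i ∈ s, 0 ≤ z i) {p : ℝ}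
    (hp : 1 ≤ p) :
    ((∑ i ∈ s, w i * z i) / ∑ i ∈ s, w i) ^ p ≤ (∑ i ∈ s, w i * z i ^ p) / ∑ i ∈ s, w i := by
  simpa only [Finset.centerMass, smul_eq_mul, Function.comp_apply, div_eq_inv_mul] using
    (convexOn_rpow hp).map_centerMass_le hw hw' hz

lemma mul_rpow_add_mul_rpow_mean_erase_le {S : Type*} [Fintype S] [DecidableEq S] {p : ℝ}
    (hp : 1 ≤ p) {w γ : S → ℝ} (hw : ∀ x, 0 ≤ w x) (hw1 : ∑ x, w x = 1) (hγ : ∀ x, 0 ≤ γ x)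
    {x₀ : S} (hx₀ : w x₀ < 1) :
    w x₀ * γ x₀ ^ p + (1 - w x₀) * ((∑ x ∈ univ.erase x₀, w x * γ x) / (1 - w x₀)) ^ p ≤
      ∑ x, w x * γ x ^ p := by
  have hwT : ∑ x ∈ univ.erase x₀, w x = 1 - w x₀ := by
    rw [← hw1, ← add_sum_erase _ _ (mem_univ x₀), add_sub_cancel_left]
  have hjensen := rpow_weighted_mean_le_weighted_mean_rpow (univ.erase x₀) (fun x _ ↦ hw x)
    (hwT ▸ sub_pos.2 hx₀) (fun x _ ↦ hγ x) hp
  rw [hwT, le_div_iff₀' (sub_pos.2 hx₀)] at hjensen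
  rw [← add_sum_erase _ _ (mem_univ x₀)]
  gcongr

theorem refined_jensen_weighted_general
    {S : Type*} [Fintype S]
    (p : ℝ) (hp : 1 < p)
    (w : S → ℝ) (hw : ∀ x, w x ∈ Set.Ioo (0 : ℝ) 1) (hw1 : ∑ x, w x = 1)
    (γ : S → ℝ) (hγ : ∀ x, 0 ≤ γ x)
    (ε : ℝ)
    (x₀ x' : S) (hne : x₀ ≠ x')
    (hx' : 0 < γ x') (hx₀ : γ x₀ ≤ ε * γ x')
    (hsmall : ε * (1 - w x₀) / w x' < 1)
    (δ : ℝ)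
    (hδ : δ = (1 - ε * (1 - w x₀) / w x') ^ 2 * (1 - w x₀) *
        min (p * (p - 1) * w x₀ / 2) (1 - (1 - w x₀) ^ (p - 1))) :
    (∑ x, w x * γ x) ^ p ≤ (1 - δ) * ∑ x, w x * γ x ^ p := by
  classical
  have hW : 0 < 1 - w x₀ := sub_pos.2 (hw x₀).2
  set A := ∑ x ∈ univ.erase x₀, w x * γ x
  have hA : w x' * γ x' ≤ A :=
    single_le_sum (f := fun x ↦ w x * γ x) (fun x _ ↦ mul_nonneg (hw x).1.le (hγ x))
      (mem_erase.2 ⟨hne.symm, mem_univ x'⟩)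
  have hApos : 0 < A := (mul_pos (hw x').1 hx').trans_le hA
  have hs : 0 < A / (1 - w x₀) := div_pos hApos hW
  have hγ₀ : γ x₀ ≤ ε * (1 - w x₀) / w x' * (A / (1 - w x₀)) := by
    have hε : 0 ≤ ε := nonneg_of_mul_nonneg_left ((hγ x₀).trans hx₀) hx'
    calc γ x₀ ≤ ε * γ x' := hx₀
      _ ≤ ε * (A / w x') := by gcongr; rwa [le_div_iff₀ (hw x').1, mul_comm]
      _ = _ := by field_simp
  have hkey := rpow_two_point_le_of_le_mul hp.le (hw x₀).1.le (hw x₀).2.le (hγ x₀) hs hγ₀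
    hsmall.le
  rw [refinedJensenConst, ← mul_assoc, ← hδ, mul_div_cancel₀ _ hW.ne'] at hkey
  have hQ : 0 < w x₀ * γ x₀ ^ p + (1 - w x₀) * (A / (1 - w x₀)) ^ p :=
    add_pos_of_nonneg_of_pos (mul_nonneg (hw x₀).1.le (rpow_nonneg (hγ x₀) p))
      (mul_pos hW (rpow_pos_of_pos hs p))
  have hδ1 : 0 ≤ 1 - δ := nonneg_of_mul_nonneg_left
    ((rpow_nonneg (add_nonneg (mul_nonneg (hw x₀).1.le (hγ x₀)) hApos.le) p).trans hkey) hQ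
  rw [← add_sum_erase _ _ (mem_univ x₀)]
  calc (w x₀ * γ x₀ + A) ^ p
      ≤ (1 - δ) * (w x₀ * γ x₀ ^ p + (1 - w x₀) * (A / (1 - w x₀)) ^ p) := hkey
    _ ≤ (1 - δ) * ∑ x, w x * γ x ^ p := mul_le_mul_of_nonneg_left
        (mul_rpow_add_mul_rpow_mean_erase_le hp.le (fun x ↦ (hw x).1.le) hw1 hγ (hw x₀).2) hδ1

theorem refined_jensen_weighted
    {S : Type*} [Fintype S]
    (hS : 2 ≤ Fintype.card S)
    (p : ℝ) (hp : 1 < p)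
    (w : S → ℝ) (hw : ∀ x, w x ∈ Set.Ioo (0 : ℝ) 1) (hw1 : ∑ x, w x = 1)
    (γ : S → ℝ) (hγ : ∀ x, 0 ≤ γ x)
    (ε : ℝ) (hε : 0 < ε)
    (x₀ x' : S) (hne : x₀ ≠ x')
    (hx' : 0 < γ x') (hx₀ : γ x₀ ≤ ε * γ x')
    (hsmall : ε * (1 - w x₀) / w x' < 1)
    (δ : ℝ)
    (hδ : δ = (1 - ε * (1 - w x₀) / w x') ^ 2 * (1 - w x₀) *
        min (p * (p - 1) * w x₀ / 2) (1 - (1 - w x₀) ^ (p - 1))) :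
    (∑ x, w x * γ x) ^ p ≤ (1 - δ) * ∑ x, w x * γ x ^ p :=
  refined_jensen_weighted_general p hp w hw hw1 γ hγ ε x₀ x' hne hx' hx₀ hsmall δ hδ
end
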